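/- Let M be a symmetric irreducible r×r 0–1 transition matrix and let A : Σ̂_M → ℝ be Lipschitz continuous. Suppose β_n → ∞ and φ_{β_n}/β_n → V uniformly, where φ_β denotes the forward effective potential for βA. Fix y ∈ Σ*_M and let μ_{y,β_n} be the effective probability for β_n A at y. Then any weak* accumulation point μ_y^∞ ∈ M_σ of the sequence (μ_{y,β_n}) is a maximizing probability for A(y,·) + V, that is, ∫ (A(y,·) + V) dμ_y^∞ = max_{μ ∈ M_σ} ∫ (A(y,·) + V) dμ. -/

import Mathlib

open MeasureTheory Filter Topology Real

/-- The one-sided subshift of finite type defined by the 0-1 transition matrix `M`: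
sequences `x : ℕ → Fin r` with `M (x j) (x (j+1)) = 1` for all `j`. -/
abbrev Shift (r : ℕ) (M : Fin r → Fin r → Bool) : Type :=
  {x : ℕ → Fin r // ∀ j : ℕ, M (x j) (x (j + 1)) = true}

variable {r : ℕ} {M : Fin r → Fin r → Bool}

/-- The matrix `M` is irreducible: any symbol can be joined to any other by an
admissible path of positive length. -/
def Irred (M : Fin r → Fin r → Bool) : Prop :=
  ∀ i j : Fin r, ∃ n : ℕ, ∃ w : Fin (n + 2) → Fin r,
    w 0 = i ∧ w (Fin.last (n + 1)) = j ∧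
    ∀ k : Fin (n + 1), M (w k.castSucc) (w k.succ) = true

/-- The left shift map on the subshift. -/
def shiftMap (x : Shift r M) : Shift r M :=
  ⟨fun j => x.1 (j + 1), fun j => x.2 (j + 1)⟩

/-- The metric `d(x,y) = Λ^k`, `k = min { j : x_j ≠ y_j }`, `d(x,x) = 0`. -/
noncomputable def shiftDist (Λ : ℝ) (x y : Shift r M) : ℝ :=
  letI := Classical.decEq (Shift r M)
  if h : x = y then 0
  else Λ ^ Nat.find (show ∃ j : ℕ, x.1 j ≠ y.1 j by
    by_contra hc
    push_neg at hc
    exact h (Subtype.ext (funext hc)))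

/-- `φ` is Lipschitz with constant `K` for the metric `shiftDist Λ`. -/
def LipBnd (Λ K : ℝ) (φ : Shift r M → ℝ) : Prop :=
  ∀ x y : Shift r M, |φ x - φ y| ≤ K * shiftDist Λ x y

/-- `φ` is Lipschitz continuous for the metric `shiftDist Λ`. -/
def IsLip (Λ : ℝ) (φ : Shift r M → ℝ) : Prop :=
  ∃ K : ℝ, LipBnd Λ K φ

/-- The best Lipschitz constant of `φ`. -/
noncomputable def lipC (Λ : ℝ) (φ : Shift r M → ℝ) : ℝ :=
  sInf {K : ℝ | 0 ≤ K ∧ LipBnd Λ K φ}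

/-- The uniform norm `‖φ‖₀`. -/
noncomputable def unorm (φ : Shift r M → ℝ) : ℝ :=
  ⨆ x : Shift r M, |φ x|

/-- An observable on the natural extension `Σ̂_M ⊂ Σ*_M × Σ_M` (with `Σ*_M`
canonically identified with `Σ_M`), as a function of `(y, x)`; it is Lipschitz with
constant `K` for the max-metric. -/
def LipBnd2 (Λ K : ℝ) (A : Shift r M → Shift r M → ℝ) : Prop :=
  ∀ y x y' x' : Shift r M,
    |A y x - A y' x'| ≤ K * max (shiftDist Λ y y') (shiftDist Λ x x')

/-- `A` is Lipschitz continuous on `Σ̂_M`. -/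
def IsLip2 (Λ : ℝ) (A : Shift r M → Shift r M → ℝ) : Prop :=
  ∃ K : ℝ, LipBnd2 Λ K A

/-- The best Lipschitz constant of the observable `A`. -/
noncomputable def lipC2 (Λ : ℝ) (A : Shift r M → Shift r M → ℝ) : ℝ :=
  sInf {K : ℝ | 0 ≤ K ∧ LipBnd2 Λ K A}

/-- The uniform norm `‖A‖₀` of the observable. -/
noncomputable def unorm2 (A : Shift r M → Shift r M → ℝ) : ℝ :=
  ⨆ p : Shift r M × Shift r M, |A p.1 p.2|

/-- `μ` is a `σ`-invariant Borel probability measure on the subshift. -/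
def InvProb (μ : Measure (Shift r M)) : Prop :=
  IsProbabilityMeasure μ ∧ μ.map shiftMap = μ

/-- Entropy of the cylinder partition of length `n`:
`H_n(μ) = - ∑_{|w| = n} μ([w]) log μ([w])`. -/
noncomputable def cylEnt (μ : Measure (Shift r M)) (n : ℕ) : ℝ :=
  ∑ w : Fin n → Fin r,
    Real.negMulLog ((μ {x : Shift r M | ∀ i : Fin n, x.1 i.1 = w i}).toReal)

/-- The Kolmogorov–Sinai entropy `h_μ(σ)` of an invariant measure on the subshift:
since the cylinder partition is generating and `n ↦ H_n(μ)` is subadditive,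
`h_μ(σ) = lim_n H_n(μ)/n = inf_n H_n(μ)/n`. -/
noncomputable def entropy (μ : Measure (Shift r M)) : ℝ :=
  ⨅ n : ℕ, cylEnt μ (n + 1) / (n + 1)

/-- The operator
`G⁺_A(φ)(y) = sup_{μ ∈ M_σ} [ ∫ (A(y,x) + φ(x)) dμ(x) + h_μ(σ) ]`. -/
noncomputable def Gplus (A : Shift r M → Shift r M → ℝ)
    (φ : Shift r M → ℝ) (y : Shift r M) : ℝ :=
  sSup {t : ℝ | ∃ μ : Measure (Shift r M), InvProb μ ∧
    t = ∫ x, (A y x + φ x) ∂μ + entropy μ}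

/-- The maximal ergodic average `max_{μ ∈ M_σ} ∫ B dμ`. -/
noncomputable def maxErg (B : Shift r M → ℝ) : ℝ :=
  sSup {t : ℝ | ∃ μ : Measure (Shift r M), InvProb μ ∧ t = ∫ x, B x ∂μ}

/-- The quotient norm on functions modulo additive constants:
`‖g‖_c = inf_{γ ∈ ℝ} ‖g + γ‖₀`. -/
noncomputable def cnorm (g : Shift r M → ℝ) : ℝ :=
  ⨅ γ : ℝ, unorm (fun x => g x + γ)

/-!
Comparing the effective probability `μ_{y,β}` with an arbitrary invariant `μ₀` in the variational
formula for `G⁺_{βA}(φ_β)(y)` and dividing by `β` gives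
`∫ (A(y,·) + φ_β/β) dμ₀ ≤ ∫ (A(y,·) + φ_β/β) dμ_{y,β} + (h(μ_{y,β}) - h(μ₀))/β`.
Entropies on `Σ_M` are bounded, so the last term vanishes as `β_n → ∞`, while `φ_{β_n}/β_n → V`
uniformly; along the subsequence converging weak* to `ν` both sides converge, and the limit is
`∫ (A(y,·) + V) dμ₀ ≤ ∫ (A(y,·) + V) dν`.
-/

section CompactSpaceIntegrals

variable {X : Type*} [TopologicalSpace X] [CompactSpace X] [MeasurableSpace X]
  [OpensMeasurableSpace X]

lemma Continuous.integrable_of_compactSpace {f : X → ℝ} (hf : Continuous f) (μ : Measure X)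
    [IsFiniteMeasure μ] : Integrable f μ :=
  (BoundedContinuousFunction.mkOfCompact ⟨f, hf⟩).integrable μ

lemma Continuous.integral_le_of_forall_le {f : X → ℝ} (hf : Continuous f) {C : ℝ}
    (hC : ∀ x, f x ≤ C) (μ : Measure X) [IsProbabilityMeasure μ] : ∫ x, f x ∂μ ≤ C := by
  simpa using integral_mono (hf.integrable_of_compactSpace μ) (integrable_const C) hC

lemma dist_integral_le_of_forall_dist_le {f g : X → ℝ} (hf : Continuous f) (hg : Continuous g)
    {ε : ℝ} (hfg : ∀ x, dist (f x) (g x) ≤ ε) (μ : Measure X) [IsProbabilityMeasure μ] :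
    dist (∫ x, f x ∂μ) (∫ x, g x ∂μ) ≤ ε := by
  rw [dist_eq_norm, ← integral_sub (hf.integrable_of_compactSpace μ)
    (hg.integrable_of_compactSpace μ)]
  simpa using norm_integral_le_of_norm_le_const (μ := μ)
    (Eventually.of_forall fun x => (dist_eq_norm (f x) (g x)).symm.trans_le (hfg x))

lemma TendstoUniformly.tendsto_integral_sub {ι : Type*} {l : Filter ι} {F : ι → X → ℝ}
    {f : X → ℝ} (hFf : TendstoUniformly F f l) (hF : ∀ i, Continuous (F i)) (hf : Continuous f)
    (μ : ι → Measure X) [∀ i, IsProbabilityMeasure (μ i)] :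
    Tendsto (fun i => ∫ x, F i x ∂μ i - ∫ x, f x ∂μ i) l (𝓝 0) := by
  refine Metric.tendsto_nhds.2 fun ε hε => ?_
  filter_upwards [Metric.tendstoUniformly_iff.1 hFf (ε / 2) (half_pos hε)] with i hi
  rw [dist_zero_right, ← dist_eq_norm]
  exact (dist_integral_le_of_forall_dist_le (hF i) hf
    (fun x => (dist_comm _ _).trans_le (hi x).le) (μ i)).trans_lt (half_lt_self hε)

lemma integral_le_of_tendsto_of_almost_maximizing {F : ℕ → X → ℝ} {f : X → ℝ}
    (hFf : TendstoUniformly F f atTop) (hF : ∀ n, Continuous (F n)) (hf : Continuous f)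
    {μ : ℕ → Measure X} [∀ n, IsProbabilityMeasure (μ n)] {ν : Measure X}
    (hμν : Tendsto (fun n => ∫ x, f x ∂μ n) atTop (𝓝 (∫ x, f x ∂ν)))
    {μ₀ : Measure X} [IsProbabilityMeasure μ₀] {c : ℕ → ℝ} (hc : Tendsto c atTop (𝓝 0))
    (hle : ∀ n, ∫ x, F n x ∂μ₀ ≤ ∫ x, F n x ∂μ n + c n) :
    ∫ x, f x ∂μ₀ ≤ ∫ x, f x ∂ν := by
  have hμ₀ : Tendsto (fun n => ∫ x, F n x ∂μ₀) atTop (𝓝 (∫ x, f x ∂μ₀)) := by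
    simpa using (hFf.tendsto_integral_sub hF hf fun _ => μ₀).add_const (∫ x, f x ∂μ₀)
  have hμ : Tendsto (fun n => ∫ x, F n x ∂μ n + c n) atTop (𝓝 (∫ x, f x ∂ν)) := by
    simpa using ((hFf.tendsto_integral_sub hF hf μ).add hμν).add hc
  exact le_of_tendsto_of_tendsto' hμ₀ hμ hle

end CompactSpaceIntegrals

instance : BorelSpace (Shift r M) :=
  Subtype.borelSpace _

lemma isClosed_setOf_admissible (M : Fin r → Fin r → Bool) :
    IsClosed {x : ℕ → Fin r | ∀ j, M (x j) (x (j + 1)) = true} := by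
  simp only [Set.ofPred_forall]
  exact isClosed_iInter fun j => isClosed_eq (by fun_prop) continuous_const

instance : CompactSpace (Shift r M) :=
  isCompact_iff_compactSpace.1 (isClosed_setOf_admissible M).isCompact

lemma eventually_nhds_forall_lt_apply_eq (x : Shift r M) (k : ℕ) :
    ∀ᶠ z in 𝓝 x, ∀ j < k, z.1 j = x.1 j := by
  refine (Filter.eventually_all_finite (Set.finite_lt_nat k)).2 fun j _ => ?_
  exact ((continuous_apply j).comp continuous_subtype_val).continuousAt.eventually_mem
    (isOpen_discrete {x.1 j} |>.mem_nhds rfl)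

lemma shiftDist_nonneg {Λ : ℝ} (hΛ : 0 ≤ Λ) (x y : Shift r M) : 0 ≤ shiftDist Λ x y := by
  unfold shiftDist
  split
  · exact le_rfl
  · exact pow_nonneg hΛ _

lemma shiftDist_self (Λ : ℝ) (x : Shift r M) : shiftDist Λ x x = 0 := by
  simp [shiftDist]

lemma shiftDist_le_pow {Λ : ℝ} (hΛ₀ : 0 ≤ Λ) (hΛ₁ : Λ ≤ 1) {k : ℕ} {x y : Shift r M}
    (hxy : ∀ j < k, x.1 j = y.1 j) : shiftDist Λ x y ≤ Λ ^ k := by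
  unfold shiftDist
  split
  · exact pow_nonneg hΛ₀ k
  · exact pow_le_pow_of_le_one hΛ₀ hΛ₁ (Nat.le_find_iff _ _ |>.2 fun j hj => not_not.2 (hxy j hj))

lemma tendsto_shiftDist_nhds {Λ : ℝ} (hΛ₀ : 0 ≤ Λ) (hΛ₁ : Λ < 1) (x : Shift r M) :
    Tendsto (fun z => shiftDist Λ z x) (𝓝 x) (𝓝 0) := by
  refine Metric.tendsto_nhds.2 fun ε hε => ?_
  obtain ⟨k, hk⟩ := ((tendsto_pow_atTop_nhds_zero_of_lt_one hΛ₀ hΛ₁).eventually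
    (gt_mem_nhds hε)).exists
  filter_upwards [eventually_nhds_forall_lt_apply_eq x k] with z hz
  rw [Real.dist_0_eq_abs, abs_of_nonneg (shiftDist_nonneg hΛ₀ z x)]
  exact (shiftDist_le_pow hΛ₀ hΛ₁.le hz).trans_lt hk

lemma LipBnd.continuous {Λ K : ℝ} (hΛ₀ : 0 ≤ Λ) (hΛ₁ : Λ < 1) {φ : Shift r M → ℝ}
    (hφ : LipBnd Λ K φ) : Continuous φ := by
  refine continuous_iff_continuousAt.2 fun x => tendsto_iff_dist_tendsto_zero.2 ?_
  exact squeeze_zero (fun _ => dist_nonneg) (fun z => hφ z x)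
    (by simpa using (tendsto_shiftDist_nhds hΛ₀ hΛ₁ x).const_mul K)

lemma IsLip.continuous {Λ : ℝ} (hΛ₀ : 0 ≤ Λ) (hΛ₁ : Λ < 1) {φ : Shift r M → ℝ}
    (hφ : IsLip Λ φ) : Continuous φ :=
  hφ.elim fun _ hK => hK.continuous hΛ₀ hΛ₁

lemma LipBnd2.lipBnd_right {Λ K : ℝ} (hΛ : 0 ≤ Λ) {A : Shift r M → Shift r M → ℝ}
    (hA : LipBnd2 Λ K A) (y : Shift r M) : LipBnd Λ K (A y) := fun x x' => by
  simpa [shiftDist_self, shiftDist_nonneg hΛ x x'] using hA y x y x'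

lemma IsLip2.continuous_right {Λ : ℝ} (hΛ₀ : 0 ≤ Λ) (hΛ₁ : Λ < 1)
    {A : Shift r M → Shift r M → ℝ} (hA : IsLip2 Λ A) (y : Shift r M) : Continuous (A y) :=
  hA.elim fun _ hK => (hK.lipBnd_right hΛ₀ y).continuous hΛ₀ hΛ₁

lemma cylEnt_nonneg (μ : Measure (Shift r M)) [IsProbabilityMeasure μ] (n : ℕ) :
    0 ≤ cylEnt μ n :=
  Finset.sum_nonneg fun _ _ => Real.negMulLog_nonneg ENNReal.toReal_nonneg measureReal_le_one

lemma entropy_nonneg (μ : Measure (Shift r M)) [IsProbabilityMeasure μ] : 0 ≤ entropy μ :=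
  le_ciInf fun _ => div_nonneg (cylEnt_nonneg μ _) (by positivity)

lemma cylEnt_le_card_pow (μ : Measure (Shift r M)) (n : ℕ) : cylEnt μ n ≤ r ^ n := by
  simpa [cylEnt] using Finset.sum_le_card_nsmul (Finset.univ : Finset (Fin n → Fin r)) _ 1
    fun _ _ => (Real.negMulLog_le_one_sub_self ENNReal.toReal_nonneg).trans
      (sub_le_self 1 ENNReal.toReal_nonneg)

lemma entropy_le (μ : Measure (Shift r M)) [IsProbabilityMeasure μ] : entropy μ ≤ r := by
  have hH₁ : entropy μ ≤ cylEnt μ (0 + 1) / ((0 : ℕ) + 1) :=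
    ciInf_le ⟨0, Set.forall_mem_range.2 fun n =>
      div_nonneg (cylEnt_nonneg μ (n + 1)) (by positivity)⟩ 0
  simpa using hH₁.trans (by simpa using cylEnt_le_card_pow μ 1)

lemma tendsto_entropy_sub_entropy_div_atTop {β : ℕ → ℝ} (hβ : Tendsto β atTop atTop)
    (μ : ℕ → Measure (Shift r M)) [∀ n, IsProbabilityMeasure (μ n)] (μ₀ : Measure (Shift r M))
    [IsProbabilityMeasure μ₀] :
    Tendsto (fun n => (entropy (μ n) - entropy μ₀) / β n) atTop (𝓝 0) := by
  refine squeeze_zero_norm' ?_ ((tendsto_const_nhds (x := (r : ℝ))).div_atTop hβ)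
  filter_upwards [hβ.eventually_gt_atTop 0] with n hn
  rw [norm_div, Real.norm_of_nonneg hn.le]
  exact div_le_div_of_nonneg_right (abs_sub_le_of_nonneg_of_le (entropy_nonneg _)
    (entropy_le _) (entropy_nonneg _) (entropy_le _)) hn.le

lemma integral_add_entropy_le_Gplus {A : Shift r M → Shift r M → ℝ} {φ : Shift r M → ℝ}
    {y : Shift r M} (hA : Continuous (A y)) (hφ : Continuous φ) {μ : Measure (Shift r M)}
    (hμ : InvProb μ) : ∫ x, (A y x + φ x) ∂μ + entropy μ ≤ Gplus A φ y := by
  obtain ⟨C, hC⟩ := isCompact_univ.exists_bound_of_continuousOn (hA.add hφ).continuousOn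
  refine le_csSup ⟨C + r, ?_⟩ ⟨μ, hμ, rfl⟩
  rintro _ ⟨m, hm, rfl⟩
  have := hm.1
  exact add_le_add ((hA.add hφ).integral_le_of_forall_le
    (fun x => (le_abs_self _).trans (hC x trivial)) m) (entropy_le m)

lemma integral_add_div_le_of_eq_Gplus {β : ℝ} (hβ : 0 < β) {A : Shift r M → Shift r M → ℝ}
    {φ : Shift r M → ℝ} {y : Shift r M} (hA : Continuous (A y)) (hφ : Continuous φ)
    {μ μ₀ : Measure (Shift r M)}
    (hμ : ∫ x, (β * A y x + φ x) ∂μ + entropy μ = Gplus (fun y x => β * A y x) φ y)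
    (hμ₀ : InvProb μ₀) :
    ∫ x, (A y x + φ x / β) ∂μ₀ ≤ ∫ x, (A y x + φ x / β) ∂μ + (entropy μ - entropy μ₀) / β := by
  have hscale : ∀ m : Measure (Shift r M),
      ∫ x, (β * A y x + φ x) ∂m = β * ∫ x, (A y x + φ x / β) ∂m := fun m => by
    rw [← integral_const_mul]
    congr with x
    field_simp
  have hle := hμ ▸ integral_add_entropy_le_Gplus (continuous_const.mul hA) hφ hμ₀
  rw [hscale, hscale] at hle
  rw [← sub_le_iff_le_add', le_div_iff₀ hβ]
  linarith

theorem accumulation_point_is_maximizing_general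
    (r : ℕ) (M : Fin r → Fin r → Bool)
    (Λ : ℝ) (hΛ : Λ ∈ Set.Ioo (0 : ℝ) 1)
    (A : Shift r M → Shift r M → ℝ) (hA : IsLip2 Λ A)
    (φ : ℝ → Shift r M → ℝ) (lam : ℝ → ℝ)
    (heff : ∀ β > (0 : ℝ), IsLip Λ (φ β) ∧
      ∀ y, Gplus (fun y x => β * A y x) (φ β) y = φ β y + lam β)
    (b : ℕ → ℝ) (hb : ∀ n, 0 < b n) (hbtop : Filter.Tendsto b Filter.atTop Filter.atTop)
    (V : Shift r M → ℝ)
    (hV : TendstoUniformly (fun n x => φ (b n) x / b n) V Filter.atTop)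
    (y : Shift r M)
    (μseq : ℕ → Measure (Shift r M))
    (hμ : ∀ n, InvProb (μseq n) ∧
      ∫ x, (b n * A y x + φ (b n) x) ∂(μseq n) + entropy (μseq n)
        = Gplus (fun y x => b n * A y x) (φ (b n)) y)
    (ν : Measure (Shift r M)) (hν : InvProb ν)
    (hacc : ∃ ι : ℕ → ℕ, StrictMono ι ∧ ∀ f : Shift r M → ℝ, Continuous f →
      Filter.Tendsto (fun k => ∫ x, f x ∂(μseq (ι k))) Filter.atTop
        (𝓝 (∫ x, f x ∂ν))) :
    ∫ x, (A y x + V x) ∂ν =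
      sSup {t : ℝ | ∃ μ : Measure (Shift r M), InvProb μ ∧
        t = ∫ x, (A y x + V x) ∂μ} := by
  obtain ⟨ι, hι, hιν⟩ := hacc
  have hprob n : IsProbabilityMeasure (μseq n) := (hμ n).1.1
  have hAy := hA.continuous_right hΛ.1.le hΛ.2 y
  have hφ n : Continuous (φ (b n)) := (heff _ (hb n)).1.continuous hΛ.1.le hΛ.2
  have hF n : Continuous fun x => A y x + φ (b n) x / b n := hAy.add ((hφ n).div_const _)
  have hf : Continuous fun x => A y x + V x :=
    hAy.add (hV.continuous (.of_forall fun n => (hφ n).div_const _))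
  have hFf : TendstoUniformly (fun n x => A y x + φ (b n) x / b n) (fun x => A y x + V x) atTop :=
    Metric.tendstoUniformly_iff.2 fun ε hε => (Metric.tendstoUniformly_iff.1 hV ε hε).mono
      fun n hn x => (dist_add_left _ _ _).trans_lt (hn x)
  refine (IsGreatest.csSup_eq ?_).symm
  refine ⟨⟨ν, hν, rfl⟩, ?_⟩
  rintro _ ⟨μ₀, hμ₀, rfl⟩
  have := hμ₀.1
  exact integral_le_of_tendsto_of_almost_maximizing
    (tendstoUniformly_iff_seq_tendstoUniformly.1 hFf ι hι.tendsto_atTop) (fun k => hF (ι k)) hf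
    (hιν _ hf) (tendsto_entropy_sub_entropy_div_atTop (hbtop.comp hι.tendsto_atTop) _ μ₀)
    fun k => integral_add_div_le_of_eq_Gplus (hb (ι k)) hAy (hφ (ι k)) (hμ (ι k)).2 hμ₀

/-- Suppose `β_n → ∞` and `φ_{β_n}/β_n → V` uniformly, where `φ_β` is
the forward effective potential for `βA`. Fix `y` and let `μ_{y,β_n}` be the effective
probability for `β_n A` at `y` (the invariant measure attaining the supremum defining
`G⁺_{β_n A}(φ_{β_n})(y)`). Then any weak* accumulation point `ν ∈ M_σ` of `(μ_{y,β_n})`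
is a maximizing probability for `A(y,·) + V`:
`∫ (A(y,·) + V) dν = max_{μ ∈ M_σ} ∫ (A(y,·) + V) dμ`. -/
theorem accumulation_point_is_maximizing
    (r : ℕ) (hr : 2 ≤ r) (M : Fin r → Fin r → Bool)
    (hSym : ∀ i j, M i j = M j i) (hIrr : Irred M)
    (Λ : ℝ) (hΛ : Λ ∈ Set.Ioo (0 : ℝ) 1)
    (A : Shift r M → Shift r M → ℝ) (hA : IsLip2 Λ A)
    (φ : ℝ → Shift r M → ℝ) (lam : ℝ → ℝ)
    (heff : ∀ β > (0 : ℝ), IsLip Λ (φ β) ∧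
      ∀ y, Gplus (fun y x => β * A y x) (φ β) y = φ β y + lam β)
    (b : ℕ → ℝ) (hb : ∀ n, 0 < b n) (hbtop : Filter.Tendsto b Filter.atTop Filter.atTop)
    (V : Shift r M → ℝ)
    (hV : TendstoUniformly (fun n x => φ (b n) x / b n) V Filter.atTop)
    (y : Shift r M)
    (μseq : ℕ → Measure (Shift r M))
    (hμ : ∀ n, InvProb (μseq n) ∧
      ∫ x, (b n * A y x + φ (b n) x) ∂(μseq n) + entropy (μseq n)
        = Gplus (fun y x => b n * A y x) (φ (b n)) y)
    (ν : Measure (Shift r M)) (hν : InvProb ν)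
    (hacc : ∃ ι : ℕ → ℕ, StrictMono ι ∧ ∀ f : Shift r M → ℝ, Continuous f →
      Filter.Tendsto (fun k => ∫ x, f x ∂(μseq (ι k))) Filter.atTop
        (𝓝 (∫ x, f x ∂ν))) :
    ∫ x, (A y x + V x) ∂ν =
      sSup {t : ℝ | ∃ μ : Measure (Shift r M), InvProb μ ∧
        t = ∫ x, (A y x + V x) ∂μ} :=
  accumulation_point_is_maximizing_general r M Λ hΛ A hA φ lam heff b hb hbtop V hV y μseq hμ ν hν
    hacc
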